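/- arXiv:1807.06272 — 10 statements merged into one kernel-verified Lean document; each statement's English description precedes it below -/
import Mathlib

section
/- If a graph G has a vertex cover of size at most k, then the number of edges of G both of whose endpoints have degree less than 20k is at most 20k^2. -/
/-- If a graph `G` has a vertex cover of size at most `k`, then the number of
edges of `G` both of whose endpoints have degree less than `20 * k` is at most
`20 * k ^ 2`. -/
theorem stmt1 {V : Type*} [Fintype V] [DecidableEq V] (G : SimpleGraph V)
    [DecidableRel G.Adj] (k : ℕ) (hk : 0 < k)
    (C : Finset V) (hcov : ∀ u v, G.Adj u v → u ∈ C ∨ v ∈ C) (hC : C.card ≤ k) :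
    (G.edgeFinset.filter (fun e => ∀ v ∈ e, G.degree v < 20 * k)).card ≤ 20 * k ^ 2 := by
  classical
  set S := G.edgeFinset.filter (fun e => ∀ v ∈ e, G.degree v < 20 * k) with hS
  have hsub : S ⊆ C.biUnion (fun v =>
      (G.incidenceFinset v).filter (fun e => ∀ w ∈ e, G.degree w < 20 * k)) := by
    intro e he
    simp only [hS, Finset.mem_filter, SimpleGraph.mem_edgeFinset] at he
    obtain ⟨hE, hdeg⟩ := he
    induction e using Sym2.ind with
    | _ a b =>
      have hadj : G.Adj a b := hE
      rcases hcov a b hadj with h | h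
      · refine Finset.mem_biUnion.2 ⟨a, h, ?_⟩
        simp [SimpleGraph.mem_incidenceFinset, SimpleGraph.incidenceSet, hE, hdeg]
      · refine Finset.mem_biUnion.2 ⟨b, h, ?_⟩
        simp [SimpleGraph.mem_incidenceFinset, SimpleGraph.incidenceSet, hE, hdeg,
          Sym2.mem_iff]
  have hcard : ∀ v ∈ C,
      ((G.incidenceFinset v).filter (fun e => ∀ w ∈ e, G.degree w < 20 * k)).card
        ≤ 20 * k := by
    intro v _
    by_cases hne : ((G.incidenceFinset v).filter
        (fun e => ∀ w ∈ e, G.degree w < 20 * k)).Nonempty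
    · obtain ⟨e, he⟩ := hne
      simp only [Finset.mem_filter, SimpleGraph.mem_incidenceFinset] at he
      have hv : v ∈ e := he.1.2
      have hdv : G.degree v < 20 * k := he.2 v hv
      calc ((G.incidenceFinset v).filter
          (fun e => ∀ w ∈ e, G.degree w < 20 * k)).card
          ≤ (G.incidenceFinset v).card := Finset.card_filter_le _ _
        _ = G.degree v := G.card_incidenceFinset_eq_degree v
        _ ≤ 20 * k := le_of_lt hdv
    · simp [Finset.not_nonempty_iff_eq_empty.mp hne]
  calc S.card ≤ (C.biUnion (fun v =>
        (G.incidenceFinset v).filter (fun e => ∀ w ∈ e, G.degree w < 20 * k))).card :=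
        Finset.card_le_card hsub
    _ ≤ ∑ v ∈ C, ((G.incidenceFinset v).filter
        (fun e => ∀ w ∈ e, G.degree w < 20 * k)).card := Finset.card_biUnion_le
    _ ≤ ∑ _v ∈ C, 20 * k := Finset.sum_le_sum hcard
    _ = C.card * (20 * k) := by simp [Finset.sum_const, mul_comm]
    _ ≤ k * (20 * k) := Nat.mul_le_mul_right _ hC
    _ = 20 * k ^ 2 := by ring
end

section
/- Let G be a graph with a vertex cover of size at most k, and let Ĝ be a subgraph of G such that (i) every edge of G whose endpoints both have degree (in G) less than 20k is an edge of Ĝ, and (ii) every vertex of G with degree (in G) at least 20k has degree at least 2k in Ĝ. Then every vertex cover of Ĝ of size at most k is also a vertex cover of G. -/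
/-- Let `G` have a vertex cover of size at most `k`, and let `Ghat` be a subgraph of `G`
such that (i) every edge of `G` whose endpoints both have `G`-degree `< 20k` is an
edge of `Ghat`, and (ii) every vertex of `G`-degree `≥ 20k` has degree `≥ 2k` in `Ghat`.
Then every vertex cover of `Ghat` of size at most `k` is also a vertex cover of `G`. -/
theorem stmt2 {V : Type*} [Fintype V] [DecidableEq V] (G Ghat : SimpleGraph V)
    [DecidableRel G.Adj] [DecidableRel Ghat.Adj] (k : ℕ) (hk : 0 < k)
    (hsub : Ghat ≤ G)
    (C : Finset V) (hcov : ∀ u v, G.Adj u v → u ∈ C ∨ v ∈ C) (hCk : C.card ≤ k)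
    (h1 : ∀ u v, G.Adj u v → G.degree u < 20 * k → G.degree v < 20 * k → Ghat.Adj u v)
    (h2 : ∀ v, 20 * k ≤ G.degree v → 2 * k ≤ Ghat.degree v)
    (D : Finset V) (hD : ∀ u v, Ghat.Adj u v → u ∈ D ∨ v ∈ D) (hDk : D.card ≤ k) :
    ∀ u v, G.Adj u v → u ∈ D ∨ v ∈ D := by
  intro u v huv
  by_contra h
  push_neg at h
  obtain ⟨hu, hv⟩ := h
  have key : ∀ w, w ∉ D → ¬ (20 * k ≤ G.degree w) := by
    intro w hw hdeg
    have hsubD : Ghat.neighborFinset w ⊆ D := by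
      intro x hx
      rw [SimpleGraph.mem_neighborFinset] at hx
      rcases hD w x hx with h | h
      · exact absurd h hw
      · exact h
    have := Finset.card_le_card hsubD
    rw [SimpleGraph.card_neighborFinset_eq_degree] at this
    have := h2 w hdeg
    omega
  have hdu := key u hu
  have hdv := key v hv
  push_neg at hdu hdv
  have := h1 u v huv hdu hdv
  rcases hD u v this with h | h
  · exact hu h
  · exact hv h
end

section
/- Let G be a graph with a maximum matching of size at most k, and let Ĝ be a subgraph of G on the same vertex set such that (i) every edge of G whose endpoints both have degree (in G) less than 40k is an edge of Ĝ, and (ii) every vertex of G with degree (in G) at least 40k has degree at least 5k in Ĝ. Then the maximum matching size of Ĝ equals the maximum matching size of G. -/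
/-- `M` is a matching of `G`: a set of edges of `G` that are pairwise vertex-disjoint. -/
def IsMatchingSet {V : Type*} [Fintype V] [DecidableEq V] (G : SimpleGraph V)
    [DecidableRel G.Adj] (M : Finset (Sym2 V)) : Prop :=
  M ⊆ G.edgeFinset ∧ ∀ e ∈ M, ∀ f ∈ M, e ≠ f → ∀ v : V, v ∈ e → v ∉ f

/-- The endpoints of an unordered pair, as a `Finset`. -/
def symFin {V : Type*} [DecidableEq V] : Sym2 V → Finset V :=
  Sym2.lift ⟨fun a b => {a, b}, fun a b => Finset.pair_comm a b⟩

lemma mem_symFin {V : Type*} [DecidableEq V] (v : V) (e : Sym2 V) :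
    v ∈ symFin e ↔ v ∈ e := by
  induction e using Sym2.ind with
  | _ a b => simp [symFin, Sym2.mem_iff]

lemma symFin_card {V : Type*} [DecidableEq V] (e : Sym2 V) : (symFin e).card ≤ 2 := by
  induction e using Sym2.ind with
  | _ a b =>
    show ({a, b} : Finset V).card ≤ 2
    exact (Finset.card_insert_le _ _).trans (by simp)

lemma card_biUnion_symFin_le {V : Type*} [DecidableEq V] (N : Finset (Sym2 V)) :
    (N.biUnion symFin).card ≤ 2 * N.card := by
  calc (N.biUnion symFin).card ≤ ∑ e ∈ N, (symFin e).card := Finset.card_biUnion_le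
    _ ≤ ∑ _e ∈ N, 2 := Finset.sum_le_sum fun e _ => symFin_card e
    _ = 2 * N.card := by rw [Finset.sum_const, smul_eq_mul, mul_comm]

/-- Greedy extension lemma: a matching `N` of `Ghat` together with a set `S` of untouched
vertices of `Ghat`-degree `≥ 5k` can be extended to a matching of size `N.card + S.card`,
provided the total count is small. -/
lemma greedy {V : Type*} [Fintype V] [DecidableEq V] (Ghat : SimpleGraph V)
    [DecidableRel Ghat.Adj] (k : ℕ) :
    ∀ (s : ℕ) (S : Finset V) (N : Finset (Sym2 V)), S.card = s →
      IsMatchingSet Ghat N →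
      (∀ v ∈ S, 5 * k ≤ Ghat.degree v) →
      (∀ v ∈ S, ∀ e ∈ N, v ∉ e) →
      2 * (N.card + S.card) ≤ 5 * k →
      ∃ N', IsMatchingSet Ghat N' ∧ N'.card = N.card + S.card := by
  intro s
  induction s with
  | zero =>
    intro S N hS hN _ _ _
    rw [Finset.card_eq_zero] at hS
    subst hS
    exact ⟨N, hN, by simp⟩
  | succ s ih =>
    intro S N hS hN hdeg hdisj hcount
    have hne : S.Nonempty := by rw [← Finset.card_pos, hS]; omega
    obtain ⟨v, hv⟩ := hne
    set F : Finset V := S ∪ N.biUnion symFin with hF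
    have hFcard : F.card ≤ S.card + 2 * N.card := by
      calc F.card ≤ S.card + (N.biUnion symFin).card := Finset.card_union_le _ _
        _ ≤ S.card + 2 * N.card := by
            have := card_biUnion_symFin_le N; omega
    have hvF : v ∈ F := Finset.mem_union_left _ hv
    have hnotsub : ¬ (Ghat.neighborFinset v ⊆ F.erase v) := by
      intro hsubn
      have h5 := hdeg v hv
      have hcle := Finset.card_le_card hsubn
      rw [SimpleGraph.card_neighborFinset_eq_degree] at hcle
      rw [Finset.card_erase_of_mem hvF] at hcle
      have hF1 : 1 ≤ F.card := Finset.card_pos.2 ⟨v, hvF⟩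
      omega
    obtain ⟨u, hu1, hu2⟩ := Finset.not_subset.1 hnotsub
    have hadj : Ghat.Adj v u := (SimpleGraph.mem_neighborFinset _ _ _).1 hu1
    have huv : u ≠ v := hadj.ne'
    have huF : u ∉ F := fun h => hu2 (Finset.mem_erase.2 ⟨huv, h⟩)
    have huS : u ∉ S := fun h => huF (Finset.mem_union_left _ h)
    have huN : ∀ e ∈ N, u ∉ e := fun e he hmem =>
      huF (Finset.mem_union_right _ (Finset.mem_biUnion.2 ⟨e, he, (mem_symFin u e).2 hmem⟩))
    have hvN : ∀ e ∈ N, v ∉ e := fun e he => hdisj v hv e he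
    have henew : s(v, u) ∉ N := fun h => hvN _ h (by simp)
    have hN' : IsMatchingSet Ghat (insert s(v, u) N) := by
      constructor
      · intro e he
        rcases Finset.mem_insert.1 he with rfl | he
        · rw [SimpleGraph.mem_edgeFinset]; exact hadj
        · exact hN.1 he
      · intro e he f hf hef w hwe hwf
        rcases Finset.mem_insert.1 he with he' | he'
        · subst he'
          rcases Finset.mem_insert.1 hf with hf' | hf'
          · exact hef hf'.symm
          · rcases Sym2.mem_iff.1 hwe with rfl | rfl
            · exact hvN f hf' hwf
            · exact huN f hf' hwf
        · rcases Finset.mem_insert.1 hf with hf' | hf'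
          · subst hf'
            rcases Sym2.mem_iff.1 hwf with rfl | rfl
            · exact hvN e he' hwe
            · exact huN e he' hwe
          · exact hN.2 e he' f hf' hef w hwe hwf
    have hcard' : (insert s(v, u) N).card = N.card + 1 :=
      Finset.card_insert_of_notMem henew
    have hScard : (S.erase v).card = s := by
      rw [Finset.card_erase_of_mem hv, hS]
      omega
    have hdeg' : ∀ w ∈ S.erase v, 5 * k ≤ Ghat.degree w :=
      fun w hw => hdeg w (Finset.mem_of_mem_erase hw)
    have hdisj' : ∀ w ∈ S.erase v, ∀ e ∈ insert s(v, u) N, w ∉ e := by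
      intro w hw e he hwmem
      rcases Finset.mem_insert.1 he with rfl | he
      · rcases Sym2.mem_iff.1 hwmem with rfl | rfl
        · exact (Finset.ne_of_mem_erase hw) rfl
        · exact huS (Finset.mem_of_mem_erase hw)
      · exact hdisj w (Finset.mem_of_mem_erase hw) e he hwmem
    have hS1 : 1 ≤ S.card := Finset.card_pos.2 ⟨v, hv⟩
    have hcount' : 2 * ((insert s(v, u) N).card + (S.erase v).card) ≤ 5 * k := by
      rw [hcard', hScard]
      omega
    obtain ⟨N', hN'm, hN'c⟩ := ih (S.erase v) (insert s(v, u) N) hScard hN' hdeg' hdisj' hcount'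
    refine ⟨N', hN'm, ?_⟩
    rw [hN'c, hcard', hScard, hS]
    omega

/-- Let `G` have maximum matching size at most `k`, and let `Ghat` be a subgraph of `G`
(on the same vertex set) such that (i) every edge of `G` whose endpoints both have
`G`-degree `< 40k` is an edge of `Ghat`, and (ii) every vertex of `G`-degree `≥ 40k`
has degree `≥ 5k` in `Ghat`. Then the maximum matching size of `Ghat` equals that of `G`
(expressed as: for every `n`, `G` has a matching of size `≥ n` iff `Ghat` does). -/
theorem stmt3 {V : Type*} [Fintype V] [DecidableEq V] (G Ghat : SimpleGraph V)
    [DecidableRel G.Adj] [DecidableRel Ghat.Adj] (k : ℕ) (hk : 0 < k)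
    (hsub : Ghat ≤ G)
    (hmax : ∀ M, IsMatchingSet G M → M.card ≤ k)
    (h1 : ∀ u v, G.Adj u v → G.degree u < 40 * k → G.degree v < 40 * k → Ghat.Adj u v)
    (h2 : ∀ v, 40 * k ≤ G.degree v → 5 * k ≤ Ghat.degree v) :
    ∀ n : ℕ, (∃ M, IsMatchingSet G M ∧ n ≤ M.card) ↔
      (∃ M, IsMatchingSet Ghat M ∧ n ≤ M.card) := by
  intro n
  constructor
  · rintro ⟨M, hM, hn⟩
    classical
    have hMk : M.card ≤ k := hmax M hM
    set Mlow : Finset (Sym2 V) :=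
      M.filter (fun e => ∀ v ∈ symFin e, G.degree v < 40 * k) with hMlow
    set Mhigh : Finset (Sym2 V) := M \ Mlow with hMhigh
    have hlowsub : Mlow ⊆ M := Finset.filter_subset _ _
    have hsplit : Mhigh.card + Mlow.card = M.card :=
      Finset.card_sdiff_add_card_eq_card hlowsub
    -- Mlow is a matching of Ghat
    have hMlowGhat : IsMatchingSet Ghat Mlow := by
      constructor
      · intro e he
        have heM := hlowsub he
        have hpred := (Finset.mem_filter.1 he).2
        induction e using Sym2.ind with
        | _ a b =>
          have hadj : G.Adj a b := (SimpleGraph.mem_edgeFinset.1 (hM.1 heM))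
          have ha : G.degree a < 40 * k := hpred a ((mem_symFin a _).2 (by simp))
          have hb : G.degree b < 40 * k := hpred b ((mem_symFin b _).2 (by simp))
          exact SimpleGraph.mem_edgeFinset.2 (h1 a b hadj ha hb)
      · intro e he f hf hef w hwe hwf
        exact hM.2 e (hlowsub he) f (hlowsub hf) hef w hwe hwf
    -- each edge of Mhigh has a high-degree endpoint
    have hhighex : ∀ e ∈ Mhigh, ∃ v, v ∈ symFin e ∧ 40 * k ≤ G.degree v := by
      intro e he
      obtain ⟨heM, henot⟩ := Finset.mem_sdiff.1 he
      by_contra hc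
      push_neg at hc
      exact henot (Finset.mem_filter.2 ⟨heM, hc⟩)
    -- the set of high-degree vertices touched by Mhigh
    set S : Finset V :=
      Finset.univ.filter (fun v => 40 * k ≤ G.degree v ∧ ∃ e ∈ Mhigh, v ∈ symFin e) with hSdef
    have hSmem : ∀ v, v ∈ S ↔ 40 * k ≤ G.degree v ∧ ∃ e ∈ Mhigh, v ∈ symFin e := by
      intro v; simp [hSdef]
    -- |Mhigh| ≤ |S|
    have hMhS : Mhigh.card ≤ S.card := by
      rcases Mhigh.eq_empty_or_nonempty with hemp | ⟨e₀, he₀⟩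
      · simp [hemp]
      · obtain ⟨v₀, hv₀, -⟩ := hhighex e₀ he₀
        haveI : Nonempty V := ⟨v₀⟩
        set f : Sym2 V → V := fun e =>
          if h : ∃ v, v ∈ symFin e ∧ 40 * k ≤ G.degree v then h.choose
          else Classical.arbitrary V with hfdef
        have hfspec : ∀ e ∈ Mhigh, f e ∈ symFin e ∧ 40 * k ≤ G.degree (f e) := by
          intro e he
          have h : ∃ v, v ∈ symFin e ∧ 40 * k ≤ G.degree v := hhighex e he
          have hfeq : f e = h.choose := by rw [hfdef]; exact dif_pos h
          rw [hfeq]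
          exact h.choose_spec
        apply Finset.card_le_card_of_injOn f
        · intro e he
          obtain ⟨h1', h2'⟩ := hfspec e he
          exact (hSmem _).2 ⟨h2', e, he, h1'⟩
        · intro e1 he1 e2 he2 hfe
          by_contra hne
          have h1' := (hfspec e1 he1).1
          have h2' := (hfspec e2 he2).1
          rw [hfe] at h1'
          exact hM.2 e1 (Finset.sdiff_subset he1) e2 (Finset.sdiff_subset he2) hne (f e2)
            ((mem_symFin _ _).1 h1') ((mem_symFin _ _).1 h2')
    -- |S| ≤ 2|Mhigh|
    have hSle : S.card ≤ 2 * Mhigh.card := by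
      have hsubS : S ⊆ Mhigh.biUnion symFin := by
        intro v hv
        obtain ⟨-, e, he, hve⟩ := (hSmem v).1 hv
        exact Finset.mem_biUnion.2 ⟨e, he, hve⟩
      exact (Finset.card_le_card hsubS).trans (card_biUnion_symFin_le _)
    -- S vertices are untouched by Mlow, and have high Ghat-degree
    have hdegS : ∀ v ∈ S, 5 * k ≤ Ghat.degree v := fun v hv => h2 v ((hSmem v).1 hv).1
    have hdisjS : ∀ v ∈ S, ∀ e ∈ Mlow, v ∉ e := by
      intro v hv e he hve
      obtain ⟨-, f, hf, hvf⟩ := (hSmem v).1 hv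
      have hef : e ≠ f := by
        rintro rfl
        exact (Finset.mem_sdiff.1 hf).2 he
      exact hM.2 f (Finset.sdiff_subset hf) e (hlowsub he) (Ne.symm hef) v
        ((mem_symFin _ _).1 hvf) hve
    have hcount : 2 * (Mlow.card + S.card) ≤ 5 * k := by omega
    obtain ⟨N', hN'm, hN'c⟩ := greedy Ghat k S.card S Mlow rfl hMlowGhat hdegS hdisjS hcount
    exact ⟨N', hN'm, by omega⟩
  · rintro ⟨M, hM, hn⟩
    refine ⟨M, ⟨fun e he => ?_, fun e he f hf hef v hve => hM.2 e he f hf hef v hve⟩, hn⟩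
    have := hM.1 he
    rw [SimpleGraph.mem_edgeFinset] at this ⊢
    induction e using Sym2.ind with
    | _ a b => exact hsub this
end

section
/- Let H be a d-uniform hypergraph with a hitting set of size at most k. Then the number of hyperedges of H that do not contain any large core as a subset is at most d!·(10dk)^d. -/
/-- `X` is a hitting set of the hypergraph with hyperedge family `H`. -/
def IsHittingSet {V : Type*} [DecidableEq V] (H : Finset (Finset V)) (X : Finset V) : Prop :=
  ∀ F ∈ H, (F ∩ X).Nonempty

/-- `C` is the core of a sunflower in `H` with at least `t` hyperedges. -/
def HasSunflower {V : Type*} [DecidableEq V] (H : Finset (Finset V)) (C : Finset V)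
    (t : ℕ) : Prop :=
  ∃ S ⊆ H, t ≤ S.card ∧ (∀ F ∈ S, C ⊆ F) ∧
    ∀ F ∈ S, ∀ F' ∈ S, F ≠ F' → F ∩ F' = C

open Finset in
lemma sunflower_lemma {V : Type*} [DecidableEq V] (d m : ℕ) :
    ∀ (H : Finset (Finset V)), (∀ F ∈ H, F.card = d) →
      Nat.factorial d * m ^ d < H.card → ∃ C, HasSunflower H C (m + 1) := by
  classical
  induction d with
  | zero =>
    intro H huni hcard
    -- all edges are ∅, so H ⊆ {∅}, card ≤ 1, but card > 1 : contradiction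
    exfalso
    have : H ⊆ {∅} := fun F hF => by
      simp [Finset.card_eq_zero.mp (huni F hF)]
    have := Finset.card_le_card this
    simp at this hcard
    omega
  | succ d ih =>
    intro H huni hcard
    rcases Nat.eq_zero_or_pos m with rfl | hm
    · -- m = 0 : a single edge is a sunflower with itself as core
      have hne : H.Nonempty := Finset.card_pos.mp (by omega)
      obtain ⟨F, hF⟩ := hne
      exact ⟨F, {F}, by simpa using hF, by simp, by simp, by simp⟩
    · -- choose a pairwise-disjoint subfamily of maximal cardinality
      set T := H.powerset.filter
        (fun S => ∀ F ∈ S, ∀ F' ∈ S, F ≠ F' → F ∩ F' = ∅) with hT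
      have hTne : T.Nonempty := ⟨∅, by simp [hT]⟩
      obtain ⟨M, hMT, hMmax⟩ := T.exists_max_image Finset.card hTne
      rw [hT, Finset.mem_filter, Finset.mem_powerset] at hMT
      obtain ⟨hMH, hMdisj⟩ := hMT
      by_cases hMbig : m + 1 ≤ M.card
      · exact ⟨∅, M, hMH, hMbig, fun F _ => Finset.empty_subset F, hMdisj⟩
      · push_neg at hMbig
        set W := M.biUnion id with hW
        have hWcard : W.card ≤ (d + 1) * m := by
          calc W.card ≤ ∑ F ∈ M, F.card := Finset.card_biUnion_le
            _ ≤ ∑ F ∈ M, (d+1) := Finset.sum_le_sum (fun F hF => le_of_eq (huni F (hMH hF)))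
            _ = M.card * (d+1) := by simp [mul_comm]
            _ ≤ m * (d+1) := by nlinarith
            _ = (d+1) * m := mul_comm _ _
        -- every edge meets W
        have hmeet : ∀ F ∈ H, ∃ x ∈ W, x ∈ F := by
          intro F hF
          by_contra hcon
          push_neg at hcon
          by_cases hFM : F ∈ M
          · have hFne : F.Nonempty := Finset.card_pos.mp (by rw [huni F hF]; omega)
            obtain ⟨x, hx⟩ := hFne
            exact hcon x (Finset.mem_biUnion.mpr ⟨F, hFM, hx⟩) hx
          · -- M ∪ {F} is pairwise disjoint, larger: contradiction with maximality
            have hdisj' : ∀ A ∈ insert F M, ∀ B ∈ insert F M, A ≠ B → A ∩ B = ∅ := by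
              intro A hA B hB hAB
              have key : ∀ G ∈ M, F ∩ G = ∅ := by
                intro G hG
                apply Finset.eq_empty_of_forall_notMem
                intro x hx
                rw [Finset.mem_inter] at hx
                exact hcon x (Finset.mem_biUnion.mpr ⟨G, hG, hx.2⟩) hx.1
              rcases Finset.mem_insert.mp hA with rfl | hA'
              · rcases Finset.mem_insert.mp hB with rfl | hB'
                · exact absurd rfl hAB
                · exact key B hB'
              · rcases Finset.mem_insert.mp hB with rfl | hB'
                · rw [Finset.inter_comm]; exact key A hA'
                · exact hMdisj A hA' B hB' hAB
            have hmem : insert F M ∈ T := by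
              rw [hT, Finset.mem_filter, Finset.mem_powerset]
              exact ⟨Finset.insert_subset hF hMH, hdisj'⟩
            have := hMmax _ hmem
            rw [Finset.card_insert_of_notMem hFM] at this
            omega
        -- some vertex of W has large degree
        have hdeg : ∃ x ∈ W, Nat.factorial d * m ^ d < (H.filter (fun F => x ∈ F)).card := by
          by_contra hcon
          push_neg at hcon
          have hcover : H ⊆ W.biUnion (fun x => H.filter (fun F => x ∈ F)) := by
            intro F hF
            obtain ⟨x, hxW, hxF⟩ := hmeet F hF
            exact Finset.mem_biUnion.mpr ⟨x, hxW, Finset.mem_filter.mpr ⟨hF, hxF⟩⟩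
          have : H.card ≤ ∑ x ∈ W, (H.filter (fun F => x ∈ F)).card :=
            le_trans (Finset.card_le_card hcover) Finset.card_biUnion_le
          have h2 : ∑ x ∈ W, (H.filter (fun F => x ∈ F)).card ≤
              W.card * (Nat.factorial d * m ^ d) := by
            calc ∑ x ∈ W, (H.filter (fun F => x ∈ F)).card
                ≤ ∑ _x ∈ W, (Nat.factorial d * m ^ d) :=
                  Finset.sum_le_sum (fun x hx => hcon x hx)
              _ = W.card * (Nat.factorial d * m ^ d) := by simp [mul_comm]
          have h3 : W.card * (Nat.factorial d * m ^ d) ≤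
              ((d+1) * m) * (Nat.factorial d * m ^ d) :=
            Nat.mul_le_mul_right _ hWcard
          have h4 : ((d+1) * m) * (Nat.factorial d * m ^ d) =
              Nat.factorial (d+1) * m ^ (d+1) := by
            rw [Nat.factorial_succ]; ring
          omega
        obtain ⟨x, _hxW, hxdeg⟩ := hdeg
        -- link of x
        set Hx := H.filter (fun F => x ∈ F) with hHx
        set L := Hx.image (fun F => F.erase x) with hL
        have hinj : ∀ F ∈ Hx, ∀ F' ∈ Hx, F.erase x = F'.erase x → F = F' := by
          intro F hF F' hF' h
          rw [hHx, Finset.mem_filter] at hF hF'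
          rw [← Finset.insert_erase hF.2, ← Finset.insert_erase hF'.2, h]
        have hLcard : L.card = Hx.card := Finset.card_image_of_injOn hinj
        have hLuni : ∀ G ∈ L, G.card = d := by
          intro G hG
          rw [hL, Finset.mem_image] at hG
          obtain ⟨F, hF, rfl⟩ := hG
          rw [hHx, Finset.mem_filter] at hF
          rw [Finset.card_erase_of_mem hF.2, huni F hF.1]; omega
        obtain ⟨C, S', hS'L, hS'card, hS'sub, hS'inter⟩ :=
          ih L hLuni (by rw [hLcard]; exact hxdeg)
        have hxnot : ∀ G ∈ S', x ∉ G := by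
          intro G hG
          have := hS'L hG
          rw [hL, Finset.mem_image] at this
          obtain ⟨F, _, rfl⟩ := this
          exact Finset.notMem_erase x F
        refine ⟨insert x C, S'.image (insert x), ?_, ?_, ?_, ?_⟩
        · intro F hF
          rw [Finset.mem_image] at hF
          obtain ⟨G, hG, rfl⟩ := hF
          have := hS'L hG
          rw [hL, Finset.mem_image] at this
          obtain ⟨F', hF', hF'e⟩ := this
          rw [hHx, Finset.mem_filter] at hF'
          rw [← hF'e, Finset.insert_erase hF'.2]
          exact hF'.1
        · rw [Finset.card_image_of_injOn]
          · exact hS'card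
          · intro G hG G' hG' h
            have : (insert x G).erase x = (insert x G').erase x := by rw [h]
            rwa [Finset.erase_insert (hxnot G hG), Finset.erase_insert (hxnot G' hG')] at this
        · intro F hF
          rw [Finset.mem_image] at hF
          obtain ⟨G, hG, rfl⟩ := hF
          exact Finset.insert_subset_insert x (hS'sub G hG)
        · intro F hF F' hF' hne
          rw [Finset.mem_image] at hF hF'
          obtain ⟨G, hG, rfl⟩ := hF
          obtain ⟨G', hG', rfl⟩ := hF'
          have hGne : G ≠ G' := by rintro rfl; exact hne rfl
          rw [← Finset.insert_inter_distrib, hS'inter G hG G' hG' hGne]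

/-- If a `d`-uniform hypergraph `H` has a hitting set of size at most `k`, then
the number of hyperedges of `H` containing no large core (a core of a sunflower
with more than `10dk` hyperedges) as a subset is at most `d! * (10dk)^d`. -/
theorem stmt4 {V : Type*} [DecidableEq V] (H : Finset (Finset V)) (d k : ℕ)
    (hd : 1 ≤ d) (hk : 1 ≤ k) (huni : ∀ F ∈ H, F.card = d)
    (X : Finset V) (hX : IsHittingSet H X) (hXk : X.card ≤ k) :
    {F | F ∈ H ∧ ¬ ∃ C ⊆ F, HasSunflower H C (10 * d * k + 1)}.ncard ≤
      Nat.factorial d * (10 * d * k) ^ d := by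
  classical
  set A := H.filter (fun F => ¬ ∃ C ⊆ F, HasSunflower H C (10 * d * k + 1)) with hA
  have hset : {F | F ∈ H ∧ ¬ ∃ C ⊆ F, HasSunflower H C (10 * d * k + 1)} = ↑A := by
    ext F; simp [hA]
  rw [hset, Set.ncard_coe_finset]
  by_contra hcon
  push_neg at hcon
  obtain ⟨C, S, hSA, hScard, hSsub, hSinter⟩ :=
    sunflower_lemma d (10 * d * k) A (fun F hF => huni F (Finset.mem_filter.mp hF).1) hcon
  have hSH : S ⊆ H := hSA.trans (Finset.filter_subset _ _)
  have hSne : S.Nonempty := Finset.card_pos.mp (by omega)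
  obtain ⟨F, hFS⟩ := hSne
  have hFA := hSA hFS
  rw [hA, Finset.mem_filter] at hFA
  exact hFA.2 ⟨C, hSsub F hFS, S, hSH, hScard, hSsub, hSinter⟩
end

section
/- Let H be a d-uniform hypergraph with a hitting set of size at most k. Then the number of large cores of H that do not contain any significant core as a subset is at most (d-1)!·k^{d-1}. -/
open Finset

section

variable {V : Type*} [DecidableEq V]

def IsSunflower (C : Finset V) (S : Finset (Finset V)) : Prop :=
  (∀ F ∈ S, C ⊆ F) ∧ ∀ F ∈ S, ∀ F' ∈ S, F ≠ F' → F ∩ F' = C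

theorem hasSunflower_iff {H : Finset (Finset V)} {C : Finset V} {t : ℕ} :
    HasSunflower H C t ↔ ∃ S ⊆ H, t ≤ #S ∧ IsSunflower C S :=
  Iff.rfl

theorem HasSunflower.mono {H : Finset (Finset V)} {C : Finset V} {s t : ℕ}
    (h : HasSunflower H C t) (hst : s ≤ t) : HasSunflower H C s :=
  let ⟨S, hSH, hS, hsun⟩ := h
  ⟨S, hSH, hst.trans hS, hsun⟩

namespace IsSunflower

variable {C : Finset V} {S : Finset (Finset V)}

theorem subset {S' : Finset (Finset V)} (hS : IsSunflower C S) (h : S' ⊆ S) :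
    IsSunflower C S' :=
  ⟨fun F hF => hS.1 F (h hF), fun F hF F' hF' => hS.2 F (h hF) F' (h hF')⟩

theorem insert {F : Finset V} (hS : IsSunflower C S) (hCF : C ⊆ F)
    (hF : ∀ G ∈ S, F ∩ G = C) : IsSunflower C (insert F S) := by
  refine ⟨by simpa [hCF] using hS.1, ?_⟩
  simp only [mem_insert]
  rintro A (rfl | hA) B (rfl | hB) hAB
  · exact absurd rfl hAB
  · exact hF B hB
  · rw [inter_comm]; exact hF A hA
  · exact hS.2 A hA B hB hAB

theorem card_le_of_forall_exists_mem_sdiff {Z : Finset V} (hS : IsSunflower C S)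
    (hZ : ∀ F ∈ S, ∃ z ∈ Z, z ∈ F ∧ z ∉ C) : #S ≤ #Z := by
  have hdisj : (S : Set (Finset V)).PairwiseDisjoint fun F => (F \ C) ∩ Z := by
    intro F hF F' hF' hne
    rw [Function.onFun, disjoint_left]
    intro z hz hz'
    simp only [mem_inter, mem_sdiff] at hz hz'
    exact hz.1.2 (hS.2 F hF F' hF' hne ▸ mem_inter.2 ⟨hz.1.1, hz'.1.1⟩)
  calc #S ≤ #(S.biUnion fun F => (F \ C) ∩ Z) :=
        card_le_card_biUnion hdisj fun F hF =>
          let ⟨z, hzZ, hzF, hzC⟩ := hZ F hF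
          ⟨z, mem_inter.2 ⟨mem_sdiff.2 ⟨hzF, hzC⟩, hzZ⟩⟩
    _ ≤ #Z := card_le_card (biUnion_subset.2 fun _ _ => inter_subset_right)

end IsSunflower

variable {H : Finset (Finset V)} {C D : Finset V} {d k t : ℕ}

theorem HasSunflower.inter_nonempty_of_isHittingSet {X : Finset V} (hX : IsHittingSet H X)
    (hXk : #X ≤ k) (h : HasSunflower H C (k + 1)) : (C ∩ X).Nonempty := by
  obtain ⟨S, hSH, hS, hsun⟩ := hasSunflower_iff.1 h
  by_contra hCX
  have : #S ≤ #X := hsun.card_le_of_forall_exists_mem_sdiff fun F hF => by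
    obtain ⟨z, hz⟩ := hX F (hSH hF)
    exact ⟨z, (mem_inter.1 hz).2, (mem_inter.1 hz).1,
      fun hzC => hCX ⟨z, mem_inter.2 ⟨hzC, (mem_inter.1 hz).2⟩⟩⟩
  omega

theorem HasSunflower.card_lt (huni : ∀ F ∈ H, #F = d) (ht : 2 ≤ t)
    (h : HasSunflower H C t) : #C < d := by
  obtain ⟨S, hSH, hS, hsun⟩ := hasSunflower_iff.1 h
  obtain ⟨F, hF, F', hF', hne⟩ := one_lt_card.1 (by omega : 1 < #S)
  have hCF : C ⊂ F := by
    refine Finset.ssubset_iff_subset_ne.2 ⟨hsun.1 F hF, fun hCF => hne ?_⟩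
    have hFF' : F ⊆ F' := inter_eq_left.1 (hCF ▸ hsun.2 F hF F' hF' hne)
    exact eq_of_subset_of_card_le hFF' (by rw [huni F (hSH hF), huni F' (hSH hF')])
  exact huni F (hSH hF) ▸ card_lt_card hCF

theorem HasSunflower.subset_biUnion (ht : 1 ≤ t) (h : HasSunflower H C t) :
    C ⊆ H.biUnion id := by
  obtain ⟨S, hSH, hS, hsun⟩ := hasSunflower_iff.1 h
  obtain ⟨F, hF⟩ := card_pos.1 (by omega : 0 < #S)
  exact (hsun.1 F hF).trans (subset_biUnion_of_mem id (hSH hF))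

theorem exists_maximal_isSunflower (H : Finset (Finset V)) (D : Finset V) :
    ∃ S ⊆ H, IsSunflower D S ∧
      ∀ F ∈ H, F ∉ S → D ⊆ F → ∃ G ∈ S, F ∩ G ≠ D := by
  classical
  obtain ⟨S, hS, hmax⟩ := (H.powerset.filter (IsSunflower D)).exists_maximal
    ⟨∅, mem_filter.2 ⟨empty_mem_powerset H, by simp [IsSunflower]⟩⟩
  obtain ⟨hSH, hsun⟩ := mem_filter.1 hS
  refine ⟨S, mem_powerset.1 hSH, hsun, fun F hFH hFS hDF => ?_⟩
  by_contra! hF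
  have hins : insert F S ∈ H.powerset.filter (IsSunflower D) :=
    mem_filter.2 ⟨mem_powerset.2 (insert_subset hFH (mem_powerset.1 hSH)), hsun.insert hDF hF⟩
  exact hFS (hmax hins (subset_insert F S) (mem_insert_self F S))

/-- `Y` is the part outside `D` of a maximal sunflower with core `D`, which has at most `k`
petals. A sunflower whose core contains `D` but misses `Y` shares at most `k` petals with it,
and by maximality each of its other petals meets `Y` outside its core. -/
theorem exists_blocker_of_not_hasSunflower (huni : ∀ F ∈ H, #F = d)
    (hD : ¬ HasSunflower H D (k + 1)) :
    ∃ Y : Finset V, Disjoint Y D ∧ #Y ≤ (d - #D) * k ∧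
      ∀ C, D ⊆ C → HasSunflower H C ((d - #D) * k + k + 1) → (C ∩ Y).Nonempty := by
  obtain ⟨S, hSH, hsun, hmax⟩ := exists_maximal_isSunflower H D
  have hSk : #S ≤ k := by
    by_contra! h
    exact hD ⟨S, hSH, h, hsun⟩
  set Y := S.biUnion (· \ D)
  have hYcard : #Y ≤ (d - #D) * k :=
    calc #Y ≤ ∑ G ∈ S, #(G \ D) := card_biUnion_le
      _ = ∑ _G ∈ S, (d - #D) := sum_congr rfl fun G hG => by
          rw [card_sdiff_of_subset (hsun.1 G hG), huni G (hSH hG)]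
      _ = #S * (d - #D) := by rw [sum_const, smul_eq_mul]
      _ ≤ (d - #D) * k := by rw [mul_comm]; exact Nat.mul_le_mul_left _ hSk
  refine ⟨Y, (disjoint_biUnion_left _ _ _).2 fun _ _ => sdiff_disjoint, hYcard, ?_⟩
  intro C hDC hC
  obtain ⟨T, hTH, hT, hTsun⟩ := hasSunflower_iff.1 hC
  by_contra hCY
  have hTS : #(T \ S) ≤ #Y := (hTsun.subset sdiff_subset).card_le_of_forall_exists_mem_sdiff
    fun F hF => by
      obtain ⟨hFT, hFS⟩ := mem_sdiff.1 hF
      have hDF : D ⊆ F := hDC.trans (hTsun.1 F hFT)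
      obtain ⟨G, hGS, hFG⟩ := hmax F (hTH hFT) hFS hDF
      obtain ⟨z, hzFG, hzD⟩ := exists_of_ssubset
        (Finset.ssubset_iff_subset_ne.2 ⟨subset_inter hDF (hsun.1 G hGS), Ne.symm hFG⟩)
      have hzY : z ∈ Y := mem_biUnion.2 ⟨G, hGS, mem_sdiff.2 ⟨(mem_inter.1 hzFG).2, hzD⟩⟩
      exact ⟨z, hzY, (mem_inter.1 hzFG).1, fun hzC => hCY ⟨z, mem_inter.2 ⟨hzC, hzY⟩⟩⟩
  have hTS' : #(T ∩ S) ≤ k := (card_le_card inter_subset_right).trans hSk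
  have := card_sdiff_add_card_inter T S
  omega

theorem card_le_sum_card_filter {α β : Type*} (s : Finset α) (Y : Finset β)
    (p : β → α → Prop) [∀ x, DecidablePred (p x)] (h : ∀ a ∈ s, ∃ x ∈ Y, p x a) :
    #s ≤ ∑ x ∈ Y, #(s.filter (p x)) := by
  classical
  calc #s ≤ #(Y.biUnion fun x => s.filter (p x)) := card_le_card fun a ha => by
        obtain ⟨x, hxY, hx⟩ := h a ha
        exact mem_biUnion.2 ⟨x, hxY, mem_filter.2 ⟨ha, hx⟩⟩
    _ ≤ _ := card_biUnion_le

theorem card_filter_superset_le_one (𝒞 : Finset (Finset V))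
    (h : ∀ C ∈ 𝒞, D ⊆ C → D = C) : #(𝒞.filter (D ⊆ ·)) ≤ 1 :=
  card_le_one.2 fun C hC C' hC' => by
    simp only [mem_filter] at hC hC'
    rw [← h C hC.1 hC.2, ← h C' hC'.1 hC'.2]

theorem card_filter_superset_le (hk : 1 ≤ k) (huni : ∀ F ∈ H, #F = d) (ht : d * k + k < t)
    (𝒞 : Finset (Finset V))
    (h𝒞 : ∀ C ∈ 𝒞, HasSunflower H C t ∧ ¬ ∃ C' ⊂ C, HasSunflower H C' (k + 1)) :
    ∀ (n : ℕ) (D : Finset V), #D + n + 1 = d →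
      #(𝒞.filter (D ⊆ ·)) ≤ (n + 1).factorial * k ^ n
  | 0, D, hD => by
    refine (card_filter_superset_le_one 𝒞 fun C hC hDC => ?_).trans (by simp)
    have := (h𝒞 C hC).1.card_lt huni (by nlinarith)
    exact eq_of_subset_of_card_le hDC (by omega)
  | n + 1, D, hD => by
    by_cases hsig : HasSunflower H D (k + 1)
    · refine (card_filter_superset_le_one 𝒞 fun C hC hDC => ?_).trans
        (Nat.one_le_iff_ne_zero.2 (by positivity))
      by_contra hne
      exact (h𝒞 C hC).2 ⟨D, Finset.ssubset_iff_subset_ne.2 ⟨hDC, hne⟩, hsig⟩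
    obtain ⟨Y, hYD, hYcard, hY⟩ := exists_blocker_of_not_hasSunflower huni hsig
    have hcover : ∀ C ∈ 𝒞.filter (D ⊆ ·), ∃ x ∈ Y, insert x D ⊆ C := fun C hC => by
      obtain ⟨hC𝒞, hDC⟩ := mem_filter.1 hC
      obtain ⟨x, hx⟩ := hY C hDC ((h𝒞 C hC𝒞).1.mono (by
        have : (d - #D) * k ≤ d * k := Nat.mul_le_mul_right _ (Nat.sub_le _ _)
        omega))
      exact ⟨x, (mem_inter.1 hx).2, insert_subset (mem_inter.1 hx).1 hDC⟩
    calc #(𝒞.filter (D ⊆ ·))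
        ≤ ∑ x ∈ Y, #((𝒞.filter (D ⊆ ·)).filter (insert x D ⊆ ·)) :=
          card_le_sum_card_filter _ _ _ hcover
      _ ≤ ∑ x ∈ Y, #(𝒞.filter (insert x D ⊆ ·)) :=
          sum_le_sum fun _ _ => card_le_card (filter_subset_filter _ (filter_subset _ _))
      _ ≤ ∑ _x ∈ Y, (n + 1).factorial * k ^ n := sum_le_sum fun x hx => by
          refine card_filter_superset_le hk huni ht 𝒞 h𝒞 n _ ?_
          rw [card_insert_of_notMem (disjoint_left.1 hYD hx)]
          omega
      _ = #Y * ((n + 1).factorial * k ^ n) := by rw [sum_const, smul_eq_mul]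
      _ ≤ ((n + 2) * k) * ((n + 1).factorial * k ^ n) :=
          Nat.mul_le_mul_right _ (by rwa [show d - #D = n + 2 by omega] at hYcard)
      _ = (n + 2).factorial * k ^ (n + 1) := by
          rw [Nat.factorial_succ (n + 1), pow_succ]; ring

theorem card_le_of_forall_inter_nonempty (hk : 1 ≤ k) (huni : ∀ F ∈ H, #F = d)
    (ht : d * k + k < t) {X : Finset V} (hXk : #X ≤ k) (𝒞 : Finset (Finset V))
    (h𝒞 : ∀ C ∈ 𝒞, HasSunflower H C t ∧ ¬ ∃ C' ⊂ C, HasSunflower H C' (k + 1))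
    (hX : ∀ C ∈ 𝒞, (C ∩ X).Nonempty) :
    #𝒞 ≤ (d - 1).factorial * k ^ (d - 1) := by
  have hmeet : ∀ C ∈ 𝒞, ∃ x ∈ X, {x} ⊆ C := fun C hC =>
    let ⟨x, hx⟩ := hX C hC
    ⟨x, (mem_inter.1 hx).2, singleton_subset_iff.2 (mem_inter.1 hx).1⟩
  obtain h𝒞e | hd : 𝒞 = ∅ ∨ 2 ≤ d := by
    refine 𝒞.eq_empty_or_nonempty.imp_right fun ⟨C, hC⟩ => ?_
    obtain ⟨x, -, hxC⟩ := hmeet C hC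
    have := (h𝒞 C hC).1.card_lt huni (by nlinarith)
    have := card_le_card hxC
    simp only [card_singleton] at this
    omega
  · simp [h𝒞e]
  calc #𝒞 ≤ ∑ x ∈ X, #(𝒞.filter ({x} ⊆ ·)) := card_le_sum_card_filter _ _ _ hmeet
    _ ≤ ∑ _x ∈ X, (d - 1).factorial * k ^ (d - 2) := sum_le_sum fun x _ => by
        have := card_filter_superset_le hk huni ht 𝒞 h𝒞 (d - 2) {x}
          (by rw [card_singleton]; omega)
        rwa [show d - 2 + 1 = d - 1 by omega] at this
    _ ≤ k * ((d - 1).factorial * k ^ (d - 2)) := by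
        rw [sum_const, smul_eq_mul]; exact Nat.mul_le_mul_right _ hXk
    _ = (d - 1).factorial * k ^ (d - 1) := by
        rw [show d - 1 = d - 2 + 1 by omega, pow_succ]; ring

end

theorem stmt5_general {V : Type*} [DecidableEq V] (H : Finset (Finset V)) (d k : ℕ)
    (hd : 1 ≤ d) (hk : 1 ≤ k) (huni : ∀ F ∈ H, F.card = d)
    (X : Finset V) (hX : IsHittingSet H X) (hXk : X.card ≤ k) :
    {C : Finset V | HasSunflower H C (10 * d * k + 1) ∧
        ¬ ∃ C' ⊂ C, HasSunflower H C' (k + 1)}.ncard ≤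
      Nat.factorial (d - 1) * k ^ (d - 1) := by
  have hlarge : d * k + k < 10 * d * k + 1 := by nlinarith
  have hfin : {C : Finset V | HasSunflower H C (10 * d * k + 1) ∧
      ¬ ∃ C' ⊂ C, HasSunflower H C' (k + 1)}.Finite :=
    (H.biUnion id).powerset.finite_toSet.subset fun C hC =>
      mem_powerset.2 (hC.1.subset_biUnion (by omega))
  rw [Set.ncard_eq_toFinset_card _ hfin]
  have h𝒞 := fun C (hC : C ∈ hfin.toFinset) => hfin.mem_toFinset.1 hC
  exact card_le_of_forall_inter_nonempty hk huni hlarge hXk _ h𝒞 fun C hC =>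
    ((h𝒞 C hC).1.mono (by omega)).inter_nonempty_of_isHittingSet hX hXk

/-- If a `d`-uniform hypergraph `H` has a hitting set of size at most `k`, then the
number of large cores (cores of sunflowers with more than `10dk` hyperedges) of `H`
that do not contain any significant core (a core of a sunflower with more than `k`
hyperedges) as a proper subset is at most `(d-1)! * k^(d-1)`. -/
theorem stmt5 {V : Type*} [DecidableEq V] (H : Finset (Finset V)) (d k : ℕ)
    (hd : 1 ≤ d) (hk : 1 ≤ k) (hkd : d ≤ k + 1) (huni : ∀ F ∈ H, F.card = d)
    (X : Finset V) (hX : IsHittingSet H X) (hXk : X.card ≤ k) :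
    {C : Finset V | HasSunflower H C (10 * d * k + 1) ∧
        ¬ ∃ C' ⊂ C, HasSunflower H C' (k + 1)}.ncard ≤
      Nat.factorial (d - 1) * k ^ (d - 1) :=
  stmt5_general H d k hd hk huni X hX hXk
end

section
/- Let H be a d-uniform hypergraph with a hitting set of size at most k, let F be a hyperedge of H that contains no large core as a subset. Then there exists a set D of vertices with D ∩ F = ∅, |D| ≤ 2^{d+5}·d^2·k, such that every hyperedge of H other than F intersects D. -/
/-- Let `H` be a `d`-uniform hypergraph with a hitting set of size at most `k` and
`F` a hyperedge of `H` containing no large core (a core of a sunflower with more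
than `10dk` hyperedges) as a proper subset. Then there exists a set `D` of vertices
disjoint from `F`, with `|D| ≤ 2^(d+5) * d^2 * k`, meeting every hyperedge of `H`
other than `F`. -/
theorem stmt7 {V : Type*} [DecidableEq V] (H : Finset (Finset V)) (d k : ℕ)
    (hd : 1 ≤ d) (hk : 1 ≤ k) (huni : ∀ F ∈ H, F.card = d)
    (X : Finset V) (hX : IsHittingSet H X) (hXk : X.card ≤ k)
    (F : Finset V) (hF : F ∈ H)
    (hno : ∀ C, C ⊂ F → ¬ HasSunflower H C (10 * d * k + 1)) :
    ∃ D : Finset V, Disjoint D F ∧ D.card ≤ 2 ^ (d + 5) * d ^ 2 * k ∧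
      ∀ F' ∈ H, F' ≠ F → (F' ∩ D).Nonempty := by
  classical
  have key : ∀ C, C ⊂ F → ∃ D : Finset V, Disjoint D F ∧ D.card ≤ 10 * d ^ 2 * k ∧
      ∀ F' ∈ H, F' ≠ F → F' ∩ F = C → (F' ∩ D).Nonempty := by
    intro C hC
    set T : Finset (Finset V) := H.filter (fun F' => F' ≠ F ∧ F' ∩ F = C) with hT
    set 𝒮 : Finset (Finset (Finset V)) := T.powerset.filter
      (fun S => ∀ a ∈ S, ∀ b ∈ S, a ≠ b → Disjoint (a \ F) (b \ F)) with h𝒮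
    have hne : 𝒮.Nonempty := ⟨∅, by simp [h𝒮]⟩
    obtain ⟨S, hS𝒮, hSmax⟩ := Finset.exists_max_image 𝒮 Finset.card hne
    have hST : S ⊆ T := Finset.mem_powerset.mp (Finset.mem_filter.mp hS𝒮).1
    have hpair : ∀ a ∈ S, ∀ b ∈ S, a ≠ b → Disjoint (a \ F) (b \ F) :=
      (Finset.mem_filter.mp hS𝒮).2
    have hmemT : ∀ a ∈ S, a ∈ H ∧ a ≠ F ∧ a ∩ F = C := by
      intro a ha
      have := hST ha
      rw [hT, Finset.mem_filter] at this
      tauto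
    -- the members of `S` form a sunflower with core `C`, so `S` is small
    have hcard : S.card ≤ 10 * d * k := by
      by_contra hgt
      push_neg at hgt
      apply hno C hC
      refine ⟨S, fun a ha => (hmemT a ha).1, hgt, ?_, ?_⟩
      · intro a ha
        rw [← (hmemT a ha).2.2]
        exact Finset.inter_subset_left
      · intro a ha b hb hab
        apply Finset.Subset.antisymm
        · intro x hx
          rcases Finset.mem_inter.mp hx with ⟨hxa, hxb⟩
          by_cases hxF : x ∈ F
          · rw [← (hmemT a ha).2.2]
            exact Finset.mem_inter.mpr ⟨hxa, hxF⟩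
          · exact absurd (hpair a ha b hb hab) (Finset.not_disjoint_iff.mpr
              ⟨x, Finset.mem_sdiff.mpr ⟨hxa, hxF⟩, Finset.mem_sdiff.mpr ⟨hxb, hxF⟩⟩)
        · intro x hx
          have h1 := (hmemT a ha).2.2
          have h2 := (hmemT b hb).2.2
          refine Finset.mem_inter.mpr ⟨?_, ?_⟩
          · have : x ∈ a ∩ F := by rw [h1]; exact hx
            exact (Finset.mem_inter.mp this).1
          · have : x ∈ b ∩ F := by rw [h2]; exact hx
            exact (Finset.mem_inter.mp this).1
    refine ⟨S.biUnion (fun a => a \ F), ?_, ?_, ?_⟩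
    · rw [Finset.disjoint_biUnion_left]
      intro a _
      exact Finset.sdiff_disjoint
    · calc (S.biUnion (fun a => a \ F)).card ≤ ∑ a ∈ S, (a \ F).card :=
            Finset.card_biUnion_le
        _ ≤ ∑ a ∈ S, d := by
            refine Finset.sum_le_sum ?_
            intro a ha
            calc (a \ F).card ≤ a.card := Finset.card_le_card (Finset.sdiff_subset)
              _ = d := huni a (hmemT a ha).1
        _ = S.card * d := by rw [Finset.sum_const, smul_eq_mul]
        _ ≤ (10 * d * k) * d := Nat.mul_le_mul_right d hcard
        _ = 10 * d ^ 2 * k := by ring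
    · intro F' hF' hne' hCap
      have hF'T : F' ∈ T := by
        rw [hT, Finset.mem_filter]
        exact ⟨hF', hne', hCap⟩
      have hpet : (F' \ F).Nonempty := by
        rw [Finset.sdiff_nonempty]
        intro hsub
        exact hne' (Finset.eq_of_subset_of_card_le hsub
          (by rw [huni F' hF', huni F hF]))
      by_cases hFS : F' ∈ S
      · obtain ⟨x, hx⟩ := hpet
        exact ⟨x, Finset.mem_inter.mpr ⟨(Finset.mem_sdiff.mp hx).1,
          Finset.mem_biUnion.mpr ⟨F', hFS, hx⟩⟩⟩
      · -- by maximality, F' \ F must meet some petal in S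
        by_contra hcon
        rw [Finset.not_nonempty_iff_eq_empty] at hcon
        have hdisj : ∀ b ∈ S, Disjoint (F' \ F) (b \ F) := by
          intro b hb
          rw [Finset.disjoint_left]
          intro x hx hxb
          have hxb' : x ∈ b \ F := hxb
          have : x ∈ F' ∩ S.biUnion (fun a => a \ F) :=
            Finset.mem_inter.mpr ⟨(Finset.mem_sdiff.mp hx).1,
              Finset.mem_biUnion.mpr ⟨b, hb, hxb'⟩⟩
          rw [hcon] at this
          exact absurd this (Finset.notMem_empty x)
        have hins : insert F' S ∈ 𝒮 := by
          rw [h𝒮, Finset.mem_filter, Finset.mem_powerset]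
          constructor
          · exact Finset.insert_subset hF'T hST
          · intro a ha b hb hab
            rcases Finset.mem_insert.mp ha with rfl | ha'
            · rcases Finset.mem_insert.mp hb with rfl | hb'
              · exact absurd rfl hab
              · exact hdisj b hb'
            · rcases Finset.mem_insert.mp hb with rfl | hb'
              · exact (hdisj a ha').symm
              · exact hpair a ha' b hb' hab
        have := hSmax _ hins
        rw [Finset.card_insert_of_notMem hFS] at this
        omega
  choose f hf1 hf2 hf3 using key
  refine ⟨F.powerset.biUnion (fun C => if h : C ⊂ F then f C h else ∅), ?_, ?_, ?_⟩
  · rw [Finset.disjoint_biUnion_left]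
    intro C _
    split
    · exact hf1 _ _
    · exact Finset.disjoint_empty_left F
  · calc (F.powerset.biUnion (fun C => if h : C ⊂ F then f C h else ∅)).card
        ≤ ∑ C ∈ F.powerset, (if h : C ⊂ F then f C h else ∅).card :=
          Finset.card_biUnion_le
      _ ≤ ∑ C ∈ F.powerset, 10 * d ^ 2 * k := by
          refine Finset.sum_le_sum ?_
          intro C _
          split
          · exact hf2 _ _
          · simp
      _ = F.powerset.card * (10 * d ^ 2 * k) := by rw [Finset.sum_const, smul_eq_mul]
      _ = 2 ^ d * (10 * d ^ 2 * k) := by rw [Finset.card_powerset, huni F hF]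
      _ ≤ 2 ^ d * (2 ^ 5 * d ^ 2 * k) := by
          refine Nat.mul_le_mul_left _ ?_
          refine Nat.mul_le_mul_right _ ?_
          refine Nat.mul_le_mul_right _ ?_
          norm_num
      _ = 2 ^ (d + 5) * d ^ 2 * k := by rw [pow_add]; ring
  · intro F' hF' hne'
    have hCsub : F' ∩ F ⊆ F := Finset.inter_subset_right
    have hC : F' ∩ F ⊂ F := by
      refine Finset.ssubset_iff_subset_ne.mpr ⟨hCsub, ?_⟩
      intro heq
      have hsub : F ⊆ F' := by
        intro x hx
        have : x ∈ F' ∩ F := by rw [heq]; exact hx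
        exact (Finset.mem_inter.mp this).1
      exact hne' (Finset.eq_of_subset_of_card_le hsub
        (by rw [huni F' hF', huni F hF])).symm
    obtain ⟨x, hx⟩ := hf3 (F' ∩ F) hC F' hF' hne' rfl
    rcases Finset.mem_inter.mp hx with ⟨hx1, hx2⟩
    refine ⟨x, Finset.mem_inter.mpr ⟨hx1, Finset.mem_biUnion.mpr ⟨F' ∩ F, ?_, ?_⟩⟩⟩
    · exact Finset.mem_powerset.mpr hCsub
    · rw [dif_pos hC]
      exact hx2
end

section
/- Bollobás-type bound: for any d-uniform hypergraph H and integer k, there exists a subfamily F' of the hyperedges of H with |F'| ≤ C(k+d, d) such that for every vertex set X of size k, if some hyperedge of H is disjoint from X then some hyperedge in F' is disjoint from X. -/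
namespace Stmt11Aux
open Finset


variable {β : Type*} [LinearOrder β]

/-- rank of `u` within `S`. -/
def rk (S : Finset β) (u : β) : ℕ := (S.filter (· < u)).card

lemma rk_lt_rk {S : Finset β} {u v : β} (hu : u ∈ S) (huv : u < v) :
    rk S u < rk S v := by
  apply Finset.card_lt_card
  constructor
  · intro w hw
    simp only [mem_filter] at hw ⊢
    exact ⟨hw.1, hw.2.trans huv⟩
  · intro hsub
    have : u ∈ S.filter (· < v) := by simp [hu, huv]
    have := hsub this
    simp at this

lemma rk_injOn {S : Finset β} {u v : β} (hu : u ∈ S) (hv : v ∈ S)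
    (h : rk S u = rk S v) : u = v := by
  rcases lt_trichotomy u v with h1 | h1 | h1
  · exact absurd h (Nat.ne_of_lt (rk_lt_rk hu h1))
  · exact h1
  · exact absurd h.symm (Nat.ne_of_lt (rk_lt_rk hv h1))

lemma rk_lt_card {S : Finset β} {u : β} (hu : u ∈ S) : rk S u < S.card := by
  apply Finset.card_lt_card
  constructor
  · exact filter_subset _ _
  · intro hsub
    have := hsub hu
    simp at this

lemma card_filter_lt_fin (c m : ℕ) (h : m ≤ c) :
    ((univ : Finset (Fin c)).filter fun j : Fin c => (j : ℕ) < m).card = m := by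
  have himg : (((univ : Finset (Fin c)).filter fun j : Fin c => (j : ℕ) < m).image Fin.val)
      = Finset.range m := by
    ext i
    simp only [mem_image, mem_filter, mem_univ, true_and, mem_range]
    constructor
    · rintro ⟨j, hj, rfl⟩; exact hj
    · intro hi; exact ⟨⟨i, lt_of_lt_of_le hi h⟩, hi, rfl⟩
  have := congrArg Finset.card himg
  rwa [Finset.card_image_of_injective _ Fin.val_injective, Finset.card_range] at this

lemma rk_orderIsoOfFin (S : Finset β) {c : ℕ} (h : S.card = c) (j : Fin c) :
    rk S ↑(S.orderIsoOfFin h j) = (j : ℕ) := by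
  have himg : S.filter (· < ↑(S.orderIsoOfFin h j))
      = (univ.filter fun j' : Fin c => (j' : ℕ) < (j : ℕ)).image
          (fun j' => ↑(S.orderIsoOfFin h j')) := by
    ext w
    simp only [mem_filter, mem_image, mem_univ, true_and]
    constructor
    · rintro ⟨hwS, hlt⟩
      refine ⟨(S.orderIsoOfFin h).symm ⟨w, hwS⟩, ?_, ?_⟩
      · rw [← Fin.lt_iff_val_lt_val, ← (S.orderIsoOfFin h).lt_iff_lt,
          OrderIso.apply_symm_apply, ← Subtype.coe_lt_coe]
        exact hlt
      · exact congrArg Subtype.val ((S.orderIsoOfFin h).apply_symm_apply ⟨w, hwS⟩)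
    · rintro ⟨j', hj', rfl⟩
      refine ⟨(S.orderIsoOfFin h j').2, ?_⟩
      rw [Subtype.coe_lt_coe, (S.orderIsoOfFin h).lt_iff_lt]
      exact hj'
  have hinj : Function.Injective (fun j' : Fin c => (↑(S.orderIsoOfFin h j') : β)) := by
    intro x y hxy
    exact (S.orderIsoOfFin h).injective (Subtype.ext hxy)
  rw [rk, himg, Finset.card_image_of_injective _ hinj,
    card_filter_lt_fin _ _ (le_of_lt j.2)]

lemma card_rk_lt (S : Finset β) {m : ℕ} (hm : m ≤ S.card) :
    (S.filter fun v => rk S v < m).card = m := by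
  have himg : (S.filter fun v => rk S v < m)
      = ((univ : Finset (Fin S.card)).filter fun j : Fin S.card => (j : ℕ) < m).image
          (fun j => ↑(S.orderIsoOfFin rfl j)) := by
    ext w
    simp only [mem_filter, mem_image, mem_univ, true_and]
    constructor
    · rintro ⟨hwS, hlt⟩
      refine ⟨(S.orderIsoOfFin rfl).symm ⟨w, hwS⟩, ?_,
        congrArg Subtype.val ((S.orderIsoOfFin rfl).apply_symm_apply ⟨w, hwS⟩)⟩
      have h2 := rk_orderIsoOfFin S rfl ((S.orderIsoOfFin rfl).symm ⟨w, hwS⟩)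
      rw [OrderIso.apply_symm_apply] at h2
      exact lt_of_le_of_lt (le_of_eq h2.symm) hlt
    · rintro ⟨j, hj, rfl⟩
      exact ⟨(S.orderIsoOfFin rfl j).2, by rw [rk_orderIsoOfFin]; exact hj⟩
  have hinj : Function.Injective (fun j : Fin S.card => (↑(S.orderIsoOfFin rfl j) : β)) := by
    intro x y hxy
    exact (S.orderIsoOfFin rfl).injective (Subtype.ext hxy)
  rw [himg, Finset.card_image_of_injective _ hinj, card_filter_lt_fin _ _ hm]

lemma lt_of_rk_filter {S : Finset β} {m : ℕ} {u v : β}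
    (hu : u ∈ S.filter fun w => rk S w < m) (hv : v ∈ S.filter fun w => ¬ rk S w < m) :
    u < v := by
  simp only [mem_filter] at hu hv
  by_contra hle
  push_neg at hle
  rcases eq_or_lt_of_le hle with rfl | hlt
  · exact hv.2 hu.2
  · exact hv.2 (lt_trans (rk_lt_rk hv.1 hlt) hu.2)

lemma exists_mono_equiv {SA TA : Finset β} (hA : SA.card = TA.card) :
    ∃ g : {x : β // x ∈ SA} ≃ {x : β // x ∈ TA},
      ∀ u : {x : β // x ∈ SA}, (↑(g u) ∈ TA) ∧ rk TA ↑(g u) = rk SA ↑u := by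
  refine ⟨((SA.orderIsoOfFin rfl).symm.trans ((Fin.castOrderIso hA).trans
    (TA.orderIsoOfFin rfl))).toEquiv, ?_⟩
  intro u
  set j := (SA.orderIsoOfFin rfl).symm u with hj
  have h1 := rk_orderIsoOfFin SA rfl j
  rw [show ((SA.orderIsoOfFin rfl) j) = u from (SA.orderIsoOfFin rfl).apply_symm_apply u] at h1
  have h2 := rk_orderIsoOfFin TA rfl (Fin.castOrderIso hA j)
  refine ⟨(TA.orderIsoOfFin rfl (Fin.castOrderIso hA j)).2, ?_⟩
  show rk TA ↑(TA.orderIsoOfFin rfl (Fin.castOrderIso hA j)) = rk SA ↑u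
  rw [h2, h1]
  simp

lemma exists_sort_perm [DecidableEq β] (SA SB TA TB : Finset β)
    (hdS : Disjoint SA SB) (hdT : Disjoint TA TB)
    (hA : SA.card = TA.card) (hB : SB.card = TB.card)
    (hU : SA ∪ SB = TA ∪ TB) :
    ∃ π : Equiv.Perm β,
      (∀ u, u ∉ SA ∪ SB → π u = u) ∧
      (∀ u, u ∈ SA → π u ∈ TA ∧ rk TA (π u) = rk SA u) ∧
      (∀ u, u ∈ SB → π u ∈ TB ∧ rk TB (π u) = rk SB u) := by
  classical
  obtain ⟨gA, hgA⟩ := exists_mono_equiv hA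
  obtain ⟨gB, hgB⟩ := exists_mono_equiv hB
  have hdS' : Disjoint (↑SA : Set β) (↑SB) := Finset.disjoint_coe.mpr hdS
  have hdT' : Disjoint (↑TA : Set β) (↑TB) := Finset.disjoint_coe.mpr hdT
  have hUset : ((↑SA : Set β) ∪ ↑SB) = ((↑TA : Set β) ∪ ↑TB) := by
    rw [← Finset.coe_union, ← Finset.coe_union, hU]
  let eU : ↥((↑SA : Set β) ∪ ↑SB) ≃ ↥((↑TA : Set β) ∪ ↑TB) :=
    (Equiv.Set.union hdS').trans ((Equiv.sumCongr gA gB).trans (Equiv.Set.union hdT').symm)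
  let fU : {x : β // ¬ x ∈ ((↑SA : Set β) ∪ ↑SB)} ≃ {x : β // ¬ x ∈ ((↑TA : Set β) ∪ ↑TB)} :=
    Equiv.subtypeEquivRight (fun x => by rw [hUset])
  refine ⟨Equiv.subtypeCongr eU fU, ?_, ?_, ?_⟩
  · intro u hu
    have hu' : ¬ u ∈ ((↑SA : Set β) ∪ ↑SB) := by
      simpa using hu
    have : Equiv.subtypeCongr eU fU u = ↑(fU ⟨u, hu'⟩) := by
      simp [Equiv.subtypeCongr, hu']
    rw [this]
    rfl
  · intro u hu
    have hu' : u ∈ ((↑SA : Set β) ∪ ↑SB) := Or.inl hu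
    have h1 : Equiv.subtypeCongr eU fU u = ↑(eU ⟨u, hu'⟩) := by
      simp [Equiv.subtypeCongr, hu']
    have h2 : eU ⟨u, hu'⟩ = ⟨↑(gA ⟨u, hu⟩), Or.inl (hgA ⟨u, hu⟩).1⟩ := by
      show ((Equiv.Set.union hdT').symm ((Equiv.sumCongr gA gB)
        ((Equiv.Set.union hdS') ⟨u, hu'⟩))) = _
      rw [Equiv.Set.union_apply_left hdS' (by exact hu)]
      rw [Equiv.sumCongr_apply, Sum.map_inl]
      rw [Equiv.Set.union_symm_apply_left hdT']
    rw [h1, h2]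
    exact hgA ⟨u, hu⟩
  · intro u hu
    have hunotA : ¬ u ∈ SA := fun h => (Finset.disjoint_left.mp hdS h) hu
    have hu' : u ∈ ((↑SA : Set β) ∪ ↑SB) := Or.inr hu
    have h1 : Equiv.subtypeCongr eU fU u = ↑(eU ⟨u, hu'⟩) := by
      simp [Equiv.subtypeCongr, hu']
    have h2 : eU ⟨u, hu'⟩ = ⟨↑(gB ⟨u, hu⟩), Or.inr (hgB ⟨u, hu⟩).1⟩ := by
      show ((Equiv.Set.union hdT').symm ((Equiv.sumCongr gA gB)
        ((Equiv.Set.union hdS') ⟨u, hu'⟩))) = _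
      rw [Equiv.Set.union_apply_right hdS' (by exact hu)]
      rw [Equiv.sumCongr_apply, Sum.map_inr]
      rw [Equiv.Set.union_symm_apply_right hdT']
    rw [h1, h2]
    exact hgB ⟨u, hu⟩
lemma card_filter_univ_mem {V : Type*} [DecidableEq V] {U s : Finset V} (h : s ⊆ U) :
    ((univ : Finset {x // x ∈ U}).filter fun x => ↑x ∈ s).card = s.card := by
  classical
  have himg : (((univ : Finset {x // x ∈ U}).filter fun x => ↑x ∈ s).image
      Subtype.val) = s := by
    ext v
    simp only [mem_image, mem_filter, mem_univ, true_and]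
    constructor
    · rintro ⟨x, hx, rfl⟩; exact hx
    · intro hv; exact ⟨⟨v, h hv⟩, hv, rfl⟩
  have h2 := congrArg Finset.card himg
  rwa [Finset.card_image_of_injective _ Subtype.val_injective] at h2

lemma bollobas {V : Type*} [DecidableEq V] {ι : Type*} [Fintype ι]
    (A B : ι → Finset V) (a b : ℕ)
    (hA : ∀ i, (A i).card = a) (hB : ∀ i, (B i).card = b)
    (hdisj : ∀ i, Disjoint (A i) (B i))
    (hcross : ∀ i j, i ≠ j → ((A i) ∩ (B j)).Nonempty) :
    Fintype.card ι ≤ (a + b).choose a := by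
  classical
  set U : Finset V := Finset.univ.biUnion (fun i => A i ∪ B i) with hUdef
  have hAU : ∀ i, A i ⊆ U := fun i x hx =>
    Finset.mem_biUnion.mpr ⟨i, mem_univ i, Finset.mem_union_left _ hx⟩
  have hBU : ∀ i, B i ⊆ U := fun i x hx =>
    Finset.mem_biUnion.mpr ⟨i, mem_univ i, Finset.mem_union_right _ hx⟩
  set n := U.card with hn
  set W := {x : V // x ∈ U} with hW
  have hcardW : Fintype.card W = n := Fintype.card_coe U
  have hΩcard : (univ : Finset (W ≃ Fin n)).card = n.factorial := by
    rw [Finset.card_univ, Fintype.card_equiv (Fintype.equivFinOfCardEq hcardW), hcardW]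
  set E : ι → Finset (W ≃ Fin n) := fun i =>
    univ.filter fun σ => ∀ x y : W, ↑x ∈ A i → ↑y ∈ B i → σ x < σ y with hE
  -- pairwise disjointness
  have hEdisj : ∀ i j, i ≠ j → Disjoint (E i) (E j) := by
    intro i j hij
    rw [Finset.disjoint_left]
    intro σ hσi hσj
    obtain ⟨x, hx⟩ := hcross i j hij
    obtain ⟨y, hy⟩ := hcross j i hij.symm
    rw [Finset.mem_inter] at hx hy
    simp only [hE, mem_filter, mem_univ, true_and] at hσi hσj
    have h1 := hσi ⟨x, hAU i hx.1⟩ ⟨y, hBU i hy.2⟩ hx.1 hy.2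
    have h2 := hσj ⟨y, hAU j hy.1⟩ ⟨x, hBU j hx.2⟩ hy.1 hx.2
    exact lt_asymm h1 h2
  -- key per-index counting bound
  have key : ∀ i, (univ : Finset (W ≃ Fin n)).card ≤ (a + b).choose a * (E i).card := by
    intro i
    let DA : Finset W := univ.filter fun x => ↑x ∈ A i
    let DB : Finset W := univ.filter fun x => ↑x ∈ B i
    have hDAcard : DA.card = a := by
      rw [show DA.card = (A i).card from card_filter_univ_mem (hAU i), hA i]
    have hDBcard : DB.card = b := by
      rw [show DB.card = (B i).card from card_filter_univ_mem (hBU i), hB i]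
    have hDdisj : Disjoint DA DB := by
      rw [Finset.disjoint_left]
      intro x hx1 hx2
      simp only [DA, DB, mem_filter, mem_univ, true_and] at hx1 hx2
      exact Finset.disjoint_left.mp (hdisj i) hx1 hx2
    let SA : (W ≃ Fin n) → Finset (Fin n) := fun σ => DA.image σ
    let SB : (W ≃ Fin n) → Finset (Fin n) := fun σ => DB.image σ
    let Pt : (W ≃ Fin n) → Finset (Fin n) := fun σ => SA σ ∪ SB σ
    have hSAcard : ∀ σ, (SA σ).card = a := fun σ => by
      rw [show (SA σ).card = DA.card from Finset.card_image_of_injective _ σ.injective, hDAcard]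
    have hSBcard : ∀ σ, (SB σ).card = b := fun σ => by
      rw [show (SB σ).card = DB.card from Finset.card_image_of_injective _ σ.injective, hDBcard]
    have hSdisj : ∀ σ, Disjoint (SA σ) (SB σ) := fun σ =>
      (Finset.disjoint_image σ.injective).mpr hDdisj
    have hPtcard : ∀ σ, (Pt σ).card = a + b := fun σ => by
      rw [show (Pt σ).card = (SA σ).card + (SB σ).card from
        Finset.card_union_of_disjoint (hSdisj σ), hSAcard, hSBcard]
    let TA : (W ≃ Fin n) → Finset (Fin n) := fun σ => (Pt σ).filter fun v => rk (Pt σ) v < a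
    let TB : (W ≃ Fin n) → Finset (Fin n) := fun σ => (Pt σ).filter fun v => ¬ rk (Pt σ) v < a
    have hTAcard : ∀ σ, (TA σ).card = a := fun σ =>
      card_rk_lt (Pt σ) (by rw [hPtcard σ]; exact Nat.le_add_right a b)
    have hTdisj : ∀ σ, Disjoint (TA σ) (TB σ) := fun σ =>
      Finset.disjoint_filter_filter_not (Pt σ) (Pt σ) _
    have hTunion : ∀ σ, TA σ ∪ TB σ = Pt σ := fun σ =>
      Finset.filter_union_filter_not_eq _ (Pt σ)
    have hTBcard : ∀ σ, (TB σ).card = b := by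
      intro σ
      have h1 : (TA σ).card + (TB σ).card = (Pt σ).card := by
        rw [← Finset.card_union_of_disjoint (hTdisj σ), hTunion σ]
      rw [hTAcard σ, hPtcard σ] at h1
      omega
    have hπ : ∀ σ : W ≃ Fin n, ∃ π : Equiv.Perm (Fin n),
        (∀ u, u ∉ SA σ ∪ SB σ → π u = u) ∧
        (∀ u, u ∈ SA σ → π u ∈ TA σ ∧ rk (TA σ) (π u) = rk (SA σ) u) ∧
        (∀ u, u ∈ SB σ → π u ∈ TB σ ∧ rk (TB σ) (π u) = rk (SB σ) u) := fun σ =>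
      exists_sort_perm (SA σ) (SB σ) (TA σ) (TB σ) (hSdisj σ) (hTdisj σ)
        (by rw [hSAcard σ, hTAcard σ]) (by rw [hSBcard σ, hTBcard σ]) (hTunion σ).symm
    choose π hπ0 hπA hπB using hπ
    let τ : (W ≃ Fin n) → (W ≃ Fin n) := fun σ => σ.trans (π σ)
    have hmemSA : ∀ (σ : W ≃ Fin n) (x : W), ↑x ∈ A i → σ x ∈ SA σ := fun σ x hx =>
      Finset.mem_image_of_mem σ (by simp [DA, hx])
    have hmemSB : ∀ (σ : W ≃ Fin n) (x : W), ↑x ∈ B i → σ x ∈ SB σ := fun σ x hx =>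
      Finset.mem_image_of_mem σ (by simp [DB, hx])
    have himgSA : ∀ σ, (SA σ).image (π σ) = TA σ := by
      intro σ
      apply Finset.eq_of_subset_of_card_le
      · intro v hv
        obtain ⟨u, hu, rfl⟩ := Finset.mem_image.mp hv
        exact (hπA σ u hu).1
      · rw [hTAcard σ, Finset.card_image_of_injective _ (π σ).injective, hSAcard σ]
    have himgSB : ∀ σ, (SB σ).image (π σ) = TB σ := by
      intro σ
      apply Finset.eq_of_subset_of_card_le
      · intro v hv
        obtain ⟨u, hu, rfl⟩ := Finset.mem_image.mp hv
        exact (hπB σ u hu).1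
      · rw [hTBcard σ, Finset.card_image_of_injective _ (π σ).injective, hSBcard σ]
    have htD : ∀ σ, (DA ∪ DB).image (τ σ) = Pt σ := by
      intro σ
      have h1 : (DA ∪ DB).image (τ σ) = ((DA ∪ DB).image σ).image (π σ) := by
        rw [Finset.image_image]; rfl
      rw [h1, Finset.image_union, Finset.image_union,
        show DA.image σ = SA σ from rfl, show DB.image σ = SB σ from rfl,
        himgSA σ, himgSB σ, hTunion σ]
    have hτE : ∀ σ, τ σ ∈ E i := by
      intro σ
      simp only [hE, mem_filter, mem_univ, true_and]
      intro x y hx hy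
      have h1 : (τ σ) x ∈ TA σ := (hπA σ _ (hmemSA σ x hx)).1
      have h2 : (τ σ) y ∈ TB σ := (hπB σ _ (hmemSB σ y hy)).1
      exact lt_of_rk_filter h1 h2
    -- the injection
    let Φ : (W ≃ Fin n) → Finset ℕ × (W ≃ Fin n) :=
      fun σ => ((SA σ).image (rk (Pt σ)), τ σ)
    have hΦmem : ∀ σ, Φ σ ∈ (Finset.range (a + b)).powersetCard a ×ˢ (E i) := by
      intro σ
      rw [Finset.mem_product]
      constructor
      · rw [Finset.mem_powersetCard]
        constructor
        · intro v hv
          obtain ⟨u, hu, rfl⟩ := Finset.mem_image.mp hv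
          rw [Finset.mem_range, ← hPtcard σ]
          exact rk_lt_card (Finset.mem_union_left _ hu)
        · rw [Finset.card_image_of_injOn, hSAcard σ]
          intro u hu v hv huv
          exact rk_injOn (Finset.mem_union_left _ (by exact hu))
            (Finset.mem_union_left _ (by exact hv)) huv
      · exact hτE σ
    have hSAfilter : ∀ σ, SA σ = (Pt σ).filter fun u => rk (Pt σ) u ∈ (SA σ).image (rk (Pt σ)) := by
      intro σ
      ext u
      simp only [mem_filter]
      constructor
      · intro hu
        exact ⟨Finset.mem_union_left _ hu, Finset.mem_image_of_mem _ hu⟩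
      · rintro ⟨huPt, hui⟩
        obtain ⟨w, hw, hwu⟩ := Finset.mem_image.mp hui
        rwa [rk_injOn huPt (Finset.mem_union_left _ hw) hwu.symm]
    have hΦinj : Set.InjOn Φ (univ : Finset (W ≃ Fin n)) := by
      intro σ _ σ' _ h
      have hτeq : τ σ = τ σ' := congrArg Prod.snd h
      have hseq : (SA σ).image (rk (Pt σ)) = (SA σ').image (rk (Pt σ')) := congrArg Prod.fst h
      have hPteq : Pt σ = Pt σ' := by rw [← htD σ, ← htD σ', hτeq]
      have hSAeq : SA σ = SA σ' := by
        rw [hSAfilter σ, hSAfilter σ', hseq, hPteq]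
      have hSBeq : SB σ = SB σ' := by
        have e1 : SB σ = Pt σ \ SA σ := (Finset.union_sdiff_cancel_left (hSdisj σ)).symm
        have e2 : SB σ' = Pt σ' \ SA σ' := (Finset.union_sdiff_cancel_left (hSdisj σ')).symm
        rw [e1, e2, hPteq, hSAeq]
      have hTAeq : TA σ = TA σ' := by
        show (Pt σ).filter _ = (Pt σ').filter _
        rw [hPteq]
      have hTBeq : TB σ = TB σ' := by
        show (Pt σ).filter _ = (Pt σ').filter _
        rw [hPteq]
      apply Equiv.ext
      intro x
      by_cases hx : ↑x ∈ A i
      · have h1 : σ x ∈ SA σ := hmemSA σ x hx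
        have h2 : σ' x ∈ SA σ := hSAeq ▸ hmemSA σ' x hx
        apply rk_injOn h1 h2
        have r1 : rk (SA σ) (σ x) = rk (TA σ) ((τ σ) x) := ((hπA σ _ h1).2).symm
        have r2 : rk (SA σ') (σ' x) = rk (TA σ') ((τ σ') x) := ((hπA σ' _ (hSAeq ▸ h2)).2).symm
        rw [r1, hSAeq, r2, hτeq, hTAeq]
      · by_cases hx' : ↑x ∈ B i
        · have h1 : σ x ∈ SB σ := hmemSB σ x hx'
          have h2 : σ' x ∈ SB σ := hSBeq ▸ hmemSB σ' x hx'
          apply rk_injOn h1 h2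
          have r1 : rk (SB σ) (σ x) = rk (TB σ) ((τ σ) x) := ((hπB σ _ h1).2).symm
          have r2 : rk (SB σ') (σ' x) = rk (TB σ') ((τ σ') x) := ((hπB σ' _ (hSBeq ▸ h2)).2).symm
          rw [r1, hSBeq, r2, hτeq, hTBeq]
        · -- x outside both: τ fixes
          have hout : ∀ σ0 : W ≃ Fin n, σ0 x ∉ SA σ0 ∪ SB σ0 := by
            intro σ0 hmem
            rcases Finset.mem_union.mp hmem with hm | hm
            · obtain ⟨w, hw, hww⟩ := Finset.mem_image.mp hm
              simp only [DA, mem_filter, mem_univ, true_and] at hw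
              rw [σ0.injective hww] at hw
              exact hx hw
            · obtain ⟨w, hw, hww⟩ := Finset.mem_image.mp hm
              simp only [DB, mem_filter, mem_univ, true_and] at hw
              rw [σ0.injective hww] at hw
              exact hx' hw
          have e1 : (τ σ) x = σ x := hπ0 σ _ (hout σ)
          have e2 : (τ σ') x = σ' x := hπ0 σ' _ (hout σ')
          rw [← e1, ← e2, hτeq]
    have hcardle : (univ : Finset (W ≃ Fin n)).card ≤
        ((Finset.range (a + b)).powersetCard a ×ˢ (E i)).card :=
      Finset.card_le_card_of_injOn Φ (fun σ _ => hΦmem σ) hΦinj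
    rw [Finset.card_product, Finset.card_powersetCard, Finset.card_range] at hcardle
    exact hcardle
  -- assemble
  have hsum : ∑ i : ι, (E i).card ≤ n.factorial := by
    rw [← hΩcard]
    rw [← Finset.card_biUnion (fun i _ j _ hij => hEdisj i j hij)]
    exact Finset.card_le_univ _
  have hmain : Fintype.card ι * n.factorial ≤ (a + b).choose a * n.factorial := by
    calc Fintype.card ι * n.factorial = ∑ _i : ι, n.factorial := by
          rw [Finset.sum_const, Finset.card_univ, smul_eq_mul]
      _ ≤ ∑ i : ι, (a + b).choose a * (E i).card := by
          apply Finset.sum_le_sum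
          intro i _
          rw [← hΩcard]
          exact key i
      _ = (a + b).choose a * ∑ i : ι, (E i).card := by rw [Finset.mul_sum]
      _ ≤ (a + b).choose a * n.factorial := Nat.mul_le_mul_left _ hsum
  exact Nat.le_of_mul_le_mul_right hmain (Nat.factorial_pos n)

end Stmt11Aux

/-- Bollobás-type bound: any `d`-uniform hypergraph `H` has a `k`-representative
subfamily of its hyperedges of size at most `(k+d choose d)`: for every vertex set
`X` of size `k`, if some hyperedge of `H` is disjoint from `X` then some hyperedge
of the subfamily is disjoint from `X`. -/
theorem stmt11 {V : Type*} [DecidableEq V] (H : Finset (Finset V)) (d k : ℕ)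
    (huni : ∀ F ∈ H, F.card = d) :
    ∃ F' ⊆ H, F'.card ≤ Nat.choose (k + d) d ∧
      ∀ X : Finset V, X.card = k → (∃ F ∈ H, Disjoint F X) →
        ∃ F₂ ∈ F', Disjoint F₂ X := by
  classical
  set P : Finset (Finset V) → Prop := fun F' =>
    ∀ X : Finset V, X.card = k → (∃ F ∈ H, Disjoint F X) → ∃ F₂ ∈ F', Disjoint F₂ X with hP
  have hHP : P H := fun X _ hex => hex
  have hne : (H.powerset.filter P).Nonempty :=
    ⟨H, Finset.mem_filter.mpr ⟨Finset.mem_powerset.mpr (Finset.Subset.refl H), hHP⟩⟩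
  obtain ⟨F', hF'mem, hmin⟩ := Finset.exists_min_image (H.powerset.filter P) Finset.card hne
  rw [Finset.mem_filter, Finset.mem_powerset] at hF'mem
  obtain ⟨hF'sub, hF'P⟩ := hF'mem
  refine ⟨F', hF'sub, ?_, hF'P⟩
  -- minimality: for each F ∈ F', erase fails
  have hwit : ∀ F ∈ F', ∃ X : Finset V, X.card = k ∧ Disjoint F X ∧
      ∀ G ∈ F', G ≠ F → ¬ Disjoint G X := by
    intro F hF
    have hnotP : ¬ P (F'.erase F) := by
      intro hPe
      have hmem : F'.erase F ∈ H.powerset.filter P := Finset.mem_filter.mpr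
        ⟨Finset.mem_powerset.mpr ((Finset.erase_subset F F').trans hF'sub), hPe⟩
      have := hmin _ hmem
      have hlt : (F'.erase F).card < F'.card := Finset.card_erase_lt_of_mem hF
      omega
    simp only [hP] at hnotP
    push_neg at hnotP
    obtain ⟨X, hXcard, hXex, hXall⟩ := hnotP
    obtain ⟨F₂, hF₂mem, hF₂disj⟩ := hF'P X hXcard hXex
    have hF₂eq : F₂ = F := by
      by_contra hne'
      exact hXall F₂ (Finset.mem_erase.mpr ⟨hne', hF₂mem⟩) hF₂disj
    refine ⟨X, hXcard, hF₂eq ▸ hF₂disj, ?_⟩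
    intro G hG hGF
    exact hXall G (Finset.mem_erase.mpr ⟨hGF, hG⟩)
  choose Xw hXw using hwit
  have hboll := Stmt11Aux.bollobas (ι := {F // F ∈ F'})
    (fun F => (F : Finset V)) (fun F => Xw F F.2) d k
    (fun F => huni F (hF'sub F.2))
    (fun F => (hXw F F.2).1)
    (fun F => (hXw F F.2).2.1)
    ?_
  · rwa [Fintype.card_coe, Nat.add_comm d k] at hboll
  · intro i j hij
    rw [← Finset.not_disjoint_iff_nonempty_inter]
    exact (hXw (↑j) j.2).2.2 ↑i i.2 (fun h => hij (Subtype.ext h))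
end

section
/- Let H be a d-uniform hypergraph and F' a k-representative family of its hyperedges, and let H' be the sub-hypergraph with hyperedge set F'. Then H has a hitting set of size at most k if and only if H' has a hitting set of size at most k. -/
/-- Let `H` be a `d`-uniform hypergraph and `F'` a `k`-representative subfamily of
its hyperedges. Then `H` has a hitting set of size at most `k` iff the sub-hypergraph
with hyperedge family `F'` does. -/
theorem stmt12 {V : Type*} [DecidableEq V] (H : Finset (Finset V)) (d k : ℕ)
    (huni : ∀ F ∈ H, F.card = d)
    (F' : Finset (Finset V)) (hsub : F' ⊆ H)
    (hrep : ∀ X : Finset V, X.card ≤ k → (∃ F ∈ H, Disjoint F X) →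
      ∃ F₂ ∈ F', Disjoint F₂ X) :
    (∃ X : Finset V, X.card ≤ k ∧ IsHittingSet H X) ↔
      (∃ X : Finset V, X.card ≤ k ∧ IsHittingSet F' X) := by
  constructor
  · rintro ⟨X, hk, hX⟩
    exact ⟨X, hk, fun F hF => hX F (hsub hF)⟩
  · rintro ⟨X, hk, hX⟩
    refine ⟨X, hk, fun F hF => ?_⟩
    rw [← Finset.not_disjoint_iff_nonempty_inter]
    intro hdisj
    obtain ⟨F₂, hF₂, hd⟩ := hrep X hk ⟨F, hF, hdisj⟩
    exact absurd (hX F₂ hF₂) (by simpa [Finset.disjoint_iff_inter_eq_empty.mp hd] using Finset.not_nonempty_empty)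
end

section
/- Let G be a graph with a t-cut of size at least k (a partition of V(G) into t parts with at least k crossing edges). Let h : V(G) → Fin N be injective on the set of endpoints of some fixed set C of k crossing edges, and let Ĝ be a subgraph of G such that for every edge (u,v) ∈ C there is an edge (u',v') of Ĝ with h(u)=h(u') and h(v)=h(v'). Then Ĝ has a partition of its vertices into at most N parts (grouping by color) such that at least k edges of Ĝ cross between distinct parts, and hence Ĝ has a t'-cut of size at least k for t' = max(t, number of nonempty color classes). -/
/-- Let `G` have a `t`-cut with a set `C` of `k` crossing edges, let `h` be injective
on the endpoints of `C`, and let `Ghat` be a subgraph of `G` such that every edge of `C`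
has a color-equivalent edge in `Ghat`. Then there is a partition of the vertices of `Ghat`
into at most `N` parts (grouping by color) such that at least `k` edges of `Ghat` cross
between distinct parts. -/
theorem stmt15 {V : Type*} [Fintype V] [DecidableEq V] (G Ghat : SimpleGraph V)
    [DecidableRel G.Adj] [DecidableRel Ghat.Adj] (t N k : ℕ)
    (hsub : Ghat ≤ G)
    (p : V → Fin t) (C : Finset (Sym2 V)) (hCE : C ⊆ G.edgeFinset) (hCk : C.card = k)
    (hcross : ∀ e ∈ C, ¬ (e.map p).IsDiag)
    (h : V → Fin N)
    (hinj : ∀ u v : V, (∃ e ∈ C, u ∈ e) → (∃ e ∈ C, v ∈ e) → h u = h v → u = v)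
    (hrep : ∀ u v : V, s(u, v) ∈ C → ∃ u' v' : V, Ghat.Adj u' v' ∧ h u = h u' ∧ h v = h v') :
    ∃ q : V → Fin N, ∃ D ⊆ Ghat.edgeFinset, k ≤ D.card ∧
      ∀ e ∈ D, ¬ (e.map q).IsDiag := by
  classical
  -- every edge of C is non-diagonal under h
  have hCnd : ∀ e ∈ C, ¬ (e.map h).IsDiag := by
    intro e heC
    induction e using Sym2.inductionOn with
    | hf u v =>
      simp only [Sym2.map_pair_eq, Sym2.isDiag_iff_proj_eq]
      intro huv
      have : u = v := hinj u v ⟨_, heC, by simp⟩ ⟨_, heC, by simp⟩ huv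
      exact hcross _ heC (by simp [this, Sym2.isDiag_iff_proj_eq])
  -- injectivity of (·.map h) on C
  have hmapinj : ∀ e₁ ∈ C, ∀ e₂ ∈ C, e₁.map h = e₂.map h → e₁ = e₂ := by
    intro e₁ h₁ e₂ h₂
    induction e₁ using Sym2.inductionOn with
    | hf a b =>
      induction e₂ using Sym2.inductionOn with
      | hf c d =>
        simp only [Sym2.map_pair_eq, Sym2.eq_iff]
        have ma : ∃ e ∈ C, a ∈ e := ⟨_, h₁, by simp⟩
        have mb : ∃ e ∈ C, b ∈ e := ⟨_, h₁, by simp⟩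
        have mc : ∃ e ∈ C, c ∈ e := ⟨_, h₂, by simp⟩
        have md : ∃ e ∈ C, d ∈ e := ⟨_, h₂, by simp⟩
        rintro (⟨hac, hbd⟩ | ⟨had, hbc⟩)
        · exact Or.inl ⟨hinj a c ma mc hac, hinj b d mb md hbd⟩
        · exact Or.inr ⟨hinj a d ma md had, hinj b c mb mc hbc⟩
  -- for each e ∈ C there is an edge of Ghat with the same h-image
  have hex : ∀ e ∈ C, ∃ e' ∈ Ghat.edgeFinset, Sym2.map h e' = Sym2.map h e := by
    intro e heC
    induction e using Sym2.inductionOn with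
    | hf u v =>
      obtain ⟨u', v', hadj, hu, hv⟩ := hrep u v heC
      exact ⟨s(u', v'), by simpa [SimpleGraph.mem_edgeFinset] using hadj,
        by simp [Sym2.map_pair_eq, hu, hv]⟩
  set f : Sym2 V → Sym2 V := fun e =>
    if he : ∃ e' ∈ Ghat.edgeFinset, Sym2.map h e' = Sym2.map h e then he.choose else e with hf
  have hfspec : ∀ e ∈ C, f e ∈ Ghat.edgeFinset ∧ Sym2.map h (f e) = Sym2.map h e := by
    intro e heC
    have he := hex e heC
    simp only [hf, dif_pos he]
    exact ⟨he.choose_spec.1, he.choose_spec.2⟩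
  refine ⟨h, C.image f, ?_, ?_, ?_⟩
  · intro e he
    obtain ⟨c, hc, rfl⟩ := Finset.mem_image.mp he
    exact (hfspec c hc).1
  · rw [← hCk]
    apply Finset.card_le_card_of_injOn f (fun c hc => Finset.mem_image_of_mem f hc)
    intro e₁ h₁ e₂ h₂ hfe
    exact hmapinj e₁ h₁ e₂ h₂ (by rw [← (hfspec e₁ h₁).2, ← (hfspec e₂ h₂).2, hfe])
  · intro e he
    obtain ⟨c, hc, rfl⟩ := Finset.mem_image.mp he
    rw [(hfspec c hc).2]
    exact hCnd c hc
end

section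
/- Let H be a d-uniform hypergraph, h : U(H) → Fin N a coloring injective on the vertex set of a sub-hypergraph H' whose hyperedge family is a k-representative set of H. Let Ĥ be the quotient hypergraph on color classes where {i₁,...,i_d} is a hyperedge iff some hyperedge of H has exactly one vertex in each of the color classes i₁,...,i_d. If Ĥ has a hitting set of size at most k, then H has a hitting set of size at most k. -/
/-- Let `H` be a `d`-uniform hypergraph, `F'` a `k`-representative subfamily of its
hyperedges, and `h : V → Fin N` a coloring injective on the vertices occurring in
`F'`. Let `Hhat` be the quotient hypergraph on colors whose hyperedges are the sets `S`
of `d` colors such that some hyperedge of `H` has exactly one vertex in each color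
class of `S`. If `Hhat` has a hitting set of size at most `k`, then `H` has a hitting
set of size at most `k`. -/
theorem stmt19 {V : Type*} [DecidableEq V] (H : Finset (Finset V)) (d k N : ℕ)
    (huni : ∀ F ∈ H, F.card = d)
    (F' : Finset (Finset V)) (hsub : F' ⊆ H)
    (hrep : ∀ X : Finset V, X.card ≤ k → (∃ F ∈ H, Disjoint F X) →
      ∃ F₂ ∈ F', Disjoint F₂ X)
    (h : V → Fin N)
    (hinj : ∀ u ∈ F'.biUnion id, ∀ v ∈ F'.biUnion id, h u = h v → u = v)
    (Hhat : Finset (Finset (Fin N)))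
    (hHhat : ∀ S : Finset (Fin N), S ∈ Hhat ↔ S.card = d ∧ ∃ F ∈ H, F.image h = S) :
    (∃ Xhat : Finset (Fin N), Xhat.card ≤ k ∧ ∀ S ∈ Hhat, (S ∩ Xhat).Nonempty) →
    ∃ X : Finset V, X.card ≤ k ∧ ∀ F ∈ H, (F ∩ X).Nonempty := by
  rintro ⟨Xhat, hXk, hXhit⟩
  set U := F'.biUnion id with hU
  set X : Finset V := U.filter (fun v => h v ∈ Xhat) with hX
  have hXU : X ⊆ U := Finset.filter_subset _ _
  have hcard : X.card ≤ k := by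
    have hinjX : Set.InjOn h X := fun a ha b hb hab =>
      hinj a (hXU ha) b (hXU hb) hab
    calc X.card = (X.image h).card := (Finset.card_image_of_injOn hinjX).symm
      _ ≤ Xhat.card := Finset.card_le_card (by
            intro c hc
            obtain ⟨v, hv, rfl⟩ := Finset.mem_image.mp hc
            exact (Finset.mem_filter.mp hv).2)
      _ ≤ k := hXk
  refine ⟨X, hcard, fun F hF => ?_⟩
  by_contra hemp
  have hdisj : Disjoint F X := by
    rw [Finset.disjoint_left]
    intro a haF haX
    exact hemp ⟨a, Finset.mem_inter.mpr ⟨haF, haX⟩⟩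
  obtain ⟨F₂, hF₂, hdisj₂⟩ := hrep X hcard ⟨F, hF, hdisj⟩
  have hF₂H : F₂ ∈ H := hsub hF₂
  have hF₂U : F₂ ⊆ U := fun v hv =>
    Finset.mem_biUnion.mpr ⟨F₂, hF₂, hv⟩
  have hSmem : F₂.image h ∈ Hhat := by
    rw [hHhat]
    refine ⟨?_, F₂, hF₂H, rfl⟩
    rw [Finset.card_image_of_injOn (fun a ha b hb hab => hinj a (hF₂U ha) b (hF₂U hb) hab)]
    exact huni F₂ hF₂H
  obtain ⟨c, hc⟩ := hXhit _ hSmem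
  rw [Finset.mem_inter] at hc
  obtain ⟨v, hvF₂, rfl⟩ := Finset.mem_image.mp hc.1
  have hvX : v ∈ X := Finset.mem_filter.mpr ⟨hF₂U hvF₂, hc.2⟩
  exact (Finset.disjoint_left.mp hdisj₂ hvF₂) hvX
end
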